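/- arXiv:0906.2527 — 2 statements merged into one kernel-verified Lean document; each statement's English description precedes it below -/
import Mathlib

section
/- Let E_1,…,E_n be d′×d complex matrices with ∑_{k=1}^n E_k† E_k = I_d, and let K = span{E_k† E_l : 1 ≤ k,l ≤ n}. Suppose (i) K is spanned by the rank-one matrices it contains, and (ii) no nonzero rank-one matrix is Hilbert–Schmidt orthogonal to K (i.e. α(E) = 1). Then for every m ≥ 1 and all unit vectors ψ, φ ∈ (ℂ^d)^{⊗m}, tr[E^{⊗m}(|ψ⟩⟨ψ|)·E^{⊗m}(|φ⟩⟨φ|)] ≠ 0; that is, α(E^{⊗m}) = 1 for all m, so C^{(0)}(E) = 0. In particular this applies when every E_k has rank at most one (entanglement-breaking channels). -/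
open Matrix

/-- The quantum channel associated with a Kraus family: `ρ ↦ ∑ k, E k * ρ * (E k)ᴴ`. -/
noncomputable def channelApply {ι m n : Type*} [Fintype ι] [Fintype m] [Fintype n]
    (E : ι → Matrix m n ℂ) (ρ : Matrix n n ℂ) : Matrix m m ℂ :=
  ∑ k, E k * ρ * (E k)ᴴ

/-- The `m`-fold Kronecker tensor power of a Kraus family. -/
noncomputable def krausPow {n d d' : ℕ} (E : Fin n → Matrix (Fin d') (Fin d) ℂ) (m : ℕ) :
    (Fin m → Fin n) → Matrix (Fin m → Fin d') (Fin m → Fin d) ℂ :=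
  fun f => Matrix.of fun r c => ∏ i, E (f i) (r i) (c i)

/-!
Write `α(S) = 1` for a set `S` of square matrices when `u† X v ≠ 0` for some `X ∈ S` whenever
`u, v ≠ 0`; for the Gram set `{E_k† E_l}` this says that no nonzero rank-one matrix is
Hilbert–Schmidt orthogonal to `K`. The Gram set of `E^{⊗(m+1)}` contains (after reindexing)
all `E_k† E_l ⊗ E_f† E_g`, so by induction on `m` it suffices that `α(R ⊗ T) = 1` whenever
`α(R) = α(T) = 1` and `R` consists of rank-one matrices (take `R` the rank-one part of `K`,
which spans `K`). For `Ψ, Φ` on `ι × κ`, `Ψ† (u v^T ⊗ B) Φ = Ψ_u† B Φ_v` with the partial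
contractions `Ψ_u = (u† ⊗ 1) Ψ` and `Φ_v = (v^T ⊗ 1) Φ`, so if all of these vanish then
`α(T) = 1` forces `Ψ_u = 0` or `Φ_v = 0` for every `u v^T ∈ R`. Reading this off at a slice
`x = Ψ(·, r) ≠ 0`, `y = Φ(·, c) ≠ 0` gives `x† (u v^T) y = 0` on all of `R`, contradicting
`α(R) = 1`. Finally `tr[E^{⊗m}(ψψ†) E^{⊗m}(φφ†)] = ∑_{f,g} |ψ† E_f† E_g φ|²`.
-/

open scoped Kronecker

theorem image2_kronecker_subset_span {ι κ 𝕜 : Type*} [CommSemiring 𝕜]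
    {A A' : Set (Matrix ι ι 𝕜)} (B : Set (Matrix κ κ 𝕜)) (hA : A ⊆ Submodule.span 𝕜 A') :
    Set.image2 (· ⊗ₖ ·) A B ⊆ Submodule.span 𝕜 (Set.image2 (· ⊗ₖ ·) A' B) := by
  rintro _ ⟨X, hX, Y, hY, rfl⟩
  have hmem :=
    Submodule.mem_map_of_mem (f := (kroneckerBilinear (R := 𝕜) (α := 𝕜)).flip Y) (hA hX)
  rw [Submodule.map_span] at hmem
  refine Submodule.span_mono ?_ hmem
  rintro _ ⟨X', hX', rfl⟩
  exact ⟨X', hX', Y, hY, rfl⟩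

section Nondegenerate

variable {ι κ : Type*} [Fintype ι] [Fintype κ]

-- `α(S) = 1` in the paper's notation.
def IsNondegenerate (S : Set (Matrix ι ι ℂ)) : Prop :=
  ∀ u v : ι → ℂ, u ≠ 0 → v ≠ 0 → ∃ X ∈ S, star u ⬝ᵥ X *ᵥ v ≠ 0

theorem trace_conjTranspose_mul_vecMulVec (X : Matrix ι ι ℂ) (u v : ι → ℂ) :
    (Xᴴ * vecMulVec u (star v)).trace = star (star u ⬝ᵥ X *ᵥ v) := by
  rw [mul_vecMulVec, trace_vecMulVec, dotProduct_star, star_mulVec, conjTranspose_conjTranspose,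
    dotProduct_comm, ← dotProduct_mulVec]

theorem isNondegenerate_iff_not_exists_trace_eq_zero (S : Set (Matrix ι ι ℂ)) :
    IsNondegenerate S ↔ ¬∃ u v : ι → ℂ, u ≠ 0 ∧ v ≠ 0 ∧
      ∀ X ∈ S, (Xᴴ * vecMulVec u (star v)).trace = 0 := by
  simp only [IsNondegenerate, trace_conjTranspose_mul_vecMulVec, star_eq_zero]
  push Not
  rfl

theorem dotProduct_mulVec_eq_zero_of_mem_span {𝕜 : Type*} [CommSemiring 𝕜]
    {S : Set (Matrix ι ι 𝕜)} {u v : ι → 𝕜} (h : ∀ X ∈ S, u ⬝ᵥ X *ᵥ v = 0) {X : Matrix ι ι 𝕜}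
    (hX : X ∈ Submodule.span 𝕜 S) : u ⬝ᵥ X *ᵥ v = 0 := by
  induction hX using Submodule.span_induction with
  | mem X hX => exact h X hX
  | zero => simp
  | add X Y _ _ hX hY => simp [add_mulVec, hX, hY]
  | smul c X _ hX => simp [smul_mulVec, hX]

namespace IsNondegenerate

variable {S T : Set (Matrix ι ι ℂ)}

theorem of_subset_span (hS : IsNondegenerate S) (hST : S ⊆ Submodule.span ℂ T) :
    IsNondegenerate T := by
  intro u v hu hv
  by_contra! h
  obtain ⟨X, hXS, hX⟩ := hS u v hu hv
  exact hX (dotProduct_mulVec_eq_zero_of_mem_span h (hST hXS))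

theorem mono (hS : IsNondegenerate S) (hST : S ⊆ T) : IsNondegenerate T :=
  hS.of_subset_span (hST.trans Submodule.subset_span)

theorem image_reindex (hS : IsNondegenerate S) (e : ι ≃ κ) :
    IsNondegenerate (reindex e e '' S) := by
  intro u v hu hv
  have comp_ne_zero : ∀ w : κ → ℂ, w ≠ 0 → w ∘ e ≠ 0 := fun w hw h =>
    hw (funext fun k => by simpa using congrFun h (e.symm k))
  obtain ⟨X, hXS, hX⟩ := hS _ _ (comp_ne_zero u hu) (comp_ne_zero v hv)
  refine ⟨_, ⟨X, hXS, rfl⟩, ?_⟩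
  rwa [reindex_apply, submatrix_mulVec_equiv, dotProduct_comp_equiv_symm]

end IsNondegenerate

theorem star_dotProduct_kronecker_vecMulVec_mulVec (Ψ Φ : ι × κ → ℂ) (u v : ι → ℂ)
    (B : Matrix κ κ ℂ) :
    star Ψ ⬝ᵥ (vecMulVec u v ⊗ₖ B) *ᵥ Φ
      = star (star u ᵥ* of (Function.curry Ψ)) ⬝ᵥ B *ᵥ (v ᵥ* of (Function.curry Φ)) := by
  simp only [dotProduct, mulVec, vecMul, kroneckerMap_apply, vecMulVec_apply, of_apply,
    Function.curry_apply, Pi.star_apply, star_sum, star_mul', star_star, Fintype.sum_prod_type,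
    Finset.sum_mul, Finset.mul_sum]
  rw [Finset.sum_comm]
  refine Finset.sum_congr rfl fun r _ => ?_
  rw [Finset.sum_comm]
  conv_rhs => rw [Finset.sum_comm]
  refine Finset.sum_congr rfl fun j _ => ?_
  rw [Finset.sum_comm]
  refine Finset.sum_congr rfl fun c _ => Finset.sum_congr rfl fun i _ => ?_
  ring

theorem dotProduct_vecMulVec_mulVec {𝕜 : Type*} [CommSemiring 𝕜] (x u v y : ι → 𝕜) :
    x ⬝ᵥ vecMulVec u v *ᵥ y = (x ⬝ᵥ u) * (v ⬝ᵥ y) := by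
  rw [vecMulVec_mulVec, dotProduct_smul, op_smul_eq_mul]

theorem IsNondegenerate.image2_kronecker {R : Set (Matrix ι ι ℂ)} {T : Set (Matrix κ κ ℂ)}
    (hR_rankOne : ∀ X ∈ R, ∃ u v, X = vecMulVec u v) (hR : IsNondegenerate R)
    (hT : IsNondegenerate T) : IsNondegenerate (Set.image2 (· ⊗ₖ ·) R T) := by
  intro Ψ Φ hΨ hΦ
  by_contra! h
  have contraction_eq_zero : ∀ u v, vecMulVec u v ∈ R →
      star u ᵥ* of (Function.curry Ψ) = 0 ∨ v ᵥ* of (Function.curry Φ) = 0 := by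
    intro u v huv
    by_contra! hne
    obtain ⟨B, hB, hB_ne⟩ := hT _ _ hne.1 hne.2
    rw [← star_dotProduct_kronecker_vecMulVec_mulVec] at hB_ne
    exact hB_ne (h _ ⟨_, huv, B, hB, rfl⟩)
  obtain ⟨⟨i, r⟩, hr⟩ := Function.ne_iff.1 hΨ
  obtain ⟨⟨j, c⟩, hc⟩ := Function.ne_iff.1 hΦ
  obtain ⟨X, hXR, hX⟩ := hR (fun i => Ψ (i, r)) (fun j => Φ (j, c))
    (Function.ne_iff.2 ⟨i, hr⟩) (Function.ne_iff.2 ⟨j, hc⟩)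
  obtain ⟨u, v, rfl⟩ := hR_rankOne X hXR
  apply hX
  rw [dotProduct_vecMulVec_mulVec]
  rcases contraction_eq_zero u v hXR with hu | hv
  · refine mul_eq_zero_of_left ?_ _
    have hux : star u ⬝ᵥ (fun i => Ψ (i, r)) = 0 := congrFun hu r
    rw [← star_star u, star_dotProduct_star, hux, star_zero]
  · exact mul_eq_zero_of_right _ (congrFun hv c)

end Nondegenerate

def gramSet {α m n : Type*} [Fintype m] (F : α → Matrix m n ℂ) : Set (Matrix n n ℂ) :=
  {X | ∃ a b, X = (F a)ᴴ * F b}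

section KrausPow

variable {n d d' : ℕ} (E : Fin n → Matrix (Fin d') (Fin d) ℂ)

theorem krausPow_succ (m : ℕ) (f : Fin (m + 1) → Fin n) :
    krausPow E (m + 1) f = reindex (Fin.consEquiv _) (Fin.consEquiv _)
      (E (f 0) ⊗ₖ krausPow E m (Fin.tail f)) := by
  ext r c
  simp [krausPow, Fin.prod_univ_succ, Fin.consEquiv, Fin.tail]

theorem image_reindex_image2_kronecker_gramSet_subset (m : ℕ) :
    reindex (Fin.consEquiv _) (Fin.consEquiv _) ''
        Set.image2 (· ⊗ₖ ·) (gramSet E) (gramSet (krausPow E m)) ⊆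
      gramSet (krausPow E (m + 1)) := by
  rintro _ ⟨_, ⟨_, ⟨k, l, rfl⟩, _, ⟨f, g, rfl⟩, rfl⟩, rfl⟩
  refine ⟨Fin.cons k f, Fin.cons l g, ?_⟩
  simp only [krausPow_succ, Fin.cons_zero, Fin.tail_cons, reindex_apply, conjTranspose_submatrix,
    submatrix_mul_equiv, conjTranspose_kronecker, mul_kronecker_mul]

theorem isNondegenerate_gramSet_krausPow_zero : IsNondegenerate (gramSet (krausPow E 0)) := by
  intro u v hu hv
  have ne_zero_at_default : ∀ w : (Fin 0 → Fin d) → ℂ, w ≠ 0 → w default ≠ 0 :=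
    fun w hw h => hw (funext fun r => by rwa [Subsingleton.elim r default])
  refine ⟨_, ⟨default, default, rfl⟩, ?_⟩
  simpa [krausPow, dotProduct, mulVec, mul_apply] using
    ⟨ne_zero_at_default u hu, ne_zero_at_default v hv⟩

theorem isNondegenerate_gramSet_krausPow {R : Set (Matrix (Fin d) (Fin d) ℂ)}
    (hR_rankOne : ∀ X ∈ R, ∃ u v, X = vecMulVec u v) (hR : IsNondegenerate R)
    (hR_span : R ⊆ Submodule.span ℂ (gramSet E)) :
    ∀ m, IsNondegenerate (gramSet (krausPow E m))
  | 0 => isNondegenerate_gramSet_krausPow_zero E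
  | m + 1 =>
    have hm := isNondegenerate_gramSet_krausPow hR_rankOne hR hR_span m
    (((hR.image2_kronecker hR_rankOne hm).of_subset_span
      (image2_kronecker_subset_span _ hR_span)).image_reindex _).mono
      (image_reindex_image2_kronecker_gramSet_subset E m)

end KrausPow

section Channel

variable {α o p : Type*} [Fintype α] [Fintype o] [Fintype p]

theorem channelApply_vecMulVec_star (F : α → Matrix o p ℂ) (ψ : p → ℂ) :
    channelApply F (vecMulVec ψ (star ψ)) = ∑ a, vecMulVec (F a *ᵥ ψ) (star (F a *ᵥ ψ)) := by
  simp only [channelApply, mul_vecMulVec, vecMulVec_mul, star_mulVec]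

theorem trace_vecMulVec_star_mul_vecMulVec_star (x y : o → ℂ) :
    (vecMulVec x (star x) * vecMulVec y (star y)).trace = (Complex.normSq (star x ⬝ᵥ y) : ℂ) := by
  rw [vecMulVec_mul_vecMulVec, trace_vecMulVec, dotProduct_smul, smul_eq_mul, ← Complex.mul_conj,
    dotProduct_star, dotProduct_comm y]
  rfl

theorem trace_channelApply_mul_channelApply (F : α → Matrix o p ℂ) (ψ φ : p → ℂ) :
    (channelApply F (vecMulVec ψ (star ψ)) * channelApply F (vecMulVec φ (star φ))).trace
      = ((∑ a, ∑ b, Complex.normSq (star ψ ⬝ᵥ ((F a)ᴴ * F b) *ᵥ φ) : ℝ) : ℂ) := by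
  simp only [channelApply_vecMulVec_star, Finset.sum_mul_sum, trace_sum,
    trace_vecMulVec_star_mul_vecMulVec_star, Complex.ofReal_sum]
  simp only [star_mulVec, ← mulVec_mulVec, dotProduct_mulVec]

theorem trace_channelApply_mul_channelApply_ne_zero (F : α → Matrix o p ℂ) {ψ φ : p → ℂ}
    (h : ∃ a b, star ψ ⬝ᵥ ((F a)ᴴ * F b) *ᵥ φ ≠ 0) :
    (channelApply F (vecMulVec ψ (star ψ)) * channelApply F (vecMulVec φ (star φ))).trace ≠ 0 := by
  obtain ⟨a, b, hab⟩ := h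
  rw [trace_channelApply_mul_channelApply, Complex.ofReal_ne_zero]
  have hnonneg : ∀ a', 0 ≤ ∑ b', Complex.normSq (star ψ ⬝ᵥ ((F a')ᴴ * F b') *ᵥ φ) :=
    fun _ => Finset.sum_nonneg fun _ _ => Complex.normSq_nonneg _
  have hpos : 0 < ∑ b', Complex.normSq (star ψ ⬝ᵥ ((F a)ᴴ * F b') *ᵥ φ) :=
    Finset.sum_pos' (fun _ _ => Complex.normSq_nonneg _)
      ⟨b, Finset.mem_univ _, Complex.normSq_pos.2 hab⟩
  exact (Finset.sum_pos' (fun a' _ => hnonneg a') ⟨a, Finset.mem_univ _, hpos⟩).ne'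

end Channel

theorem stmt_11_general {n d d' : ℕ} (E : Fin n → Matrix (Fin d') (Fin d) ℂ)
    (K : Submodule ℂ (Matrix (Fin d) (Fin d) ℂ))
    (hK : K = Submodule.span ℂ {X : Matrix (Fin d) (Fin d) ℂ | ∃ k l, X = (E k)ᴴ * E l})
    (hspan : Submodule.span ℂ {X : Matrix (Fin d) (Fin d) ℂ |
        (∃ u v : Fin d → ℂ, u ≠ 0 ∧ v ≠ 0 ∧ X = vecMulVec u (star v)) ∧ X ∈ K} = K)
    (hunext : ¬∃ u v : Fin d → ℂ, u ≠ 0 ∧ v ≠ 0 ∧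
        ∀ X ∈ K, (Xᴴ * vecMulVec u (star v)).trace = 0) :
    ∀ m, 1 ≤ m → ∀ ψ φ : (Fin m → Fin d) → ℂ, star ψ ⬝ᵥ ψ = 1 → star φ ⬝ᵥ φ = 1 →
      (channelApply (krausPow E m) (vecMulVec ψ (star ψ)) *
        channelApply (krausPow E m) (vecMulVec φ (star φ))).trace ≠ 0 := by
  intro m _ ψ φ hψ hφ
  have hK_nondeg : IsNondegenerate (K : Set (Matrix (Fin d) (Fin d) ℂ)) :=
    (isNondegenerate_iff_not_exists_trace_eq_zero _).2 hunext
  have hR := hK_nondeg.of_subset_span hspan.ge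
  have hgram := isNondegenerate_gramSet_krausPow E
    (fun _ hX => let ⟨u, v, _, _, hX⟩ := hX.1; ⟨u, star v, hX⟩) hR (fun _ hX => hK ▸ hX.2) m
  obtain ⟨_, ⟨f, g, rfl⟩, hfg⟩ :=
    hgram ψ φ (by rintro rfl; simp at hψ) (by rintro rfl; simp at hφ)
  exact trace_channelApply_mul_channelApply_ne_zero _ ⟨f, g, hfg⟩

/-- if `K = span {E_k† E_l}` is spanned by the rank-one matrices it contains
and no nonzero rank-one matrix is Hilbert–Schmidt orthogonal to `K` (i.e. `α(E) = 1`), then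
`α(E^{⊗m}) = 1` for every `m ≥ 1`, so `C⁰(E) = 0`. -/
theorem stmt_11 {n d d' : ℕ} (E : Fin n → Matrix (Fin d') (Fin d) ℂ)
    (hE : ∑ k, (E k)ᴴ * E k = 1)
    (K : Submodule ℂ (Matrix (Fin d) (Fin d) ℂ))
    (hK : K = Submodule.span ℂ {X : Matrix (Fin d) (Fin d) ℂ | ∃ k l, X = (E k)ᴴ * E l})
    (hspan : Submodule.span ℂ {X : Matrix (Fin d) (Fin d) ℂ |
        (∃ u v : Fin d → ℂ, u ≠ 0 ∧ v ≠ 0 ∧ X = vecMulVec u (star v)) ∧ X ∈ K} = K)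
    (hunext : ¬∃ u v : Fin d → ℂ, u ≠ 0 ∧ v ≠ 0 ∧
        ∀ X ∈ K, (Xᴴ * vecMulVec u (star v)).trace = 0) :
    ∀ m, 1 ≤ m → ∀ ψ φ : (Fin m → Fin d) → ℂ, star ψ ⬝ᵥ ψ = 1 → star φ ⬝ᵥ φ = 1 →
      (channelApply (krausPow E m) (vecMulVec ψ (star ψ)) *
        channelApply (krausPow E m) (vecMulVec φ (star φ))).trace ≠ 0 :=
  stmt_11_general E K hK hspan hunext
end

section
/- Let {e_1,…,e_d} and {f_1,…,f_d} be two orthonormal bases of ℂ^d, and let E be the channel on ℂ²⊗ℂ^d with Kraus operators (1/√2)|0⟩⟨0|⊗|e_k⟩⟨e_k|, (1/√2)|1⟩⟨+|⊗|e_k⟩⟨e_k|, (1/√2)|0⟩⟨1|⊗|f_k⟩⟨e_k|, (1/√2)|1⟩⟨−|⊗|f_k⟩⟨e_k| (k = 1,…,d). Define the d unit vectors w_k = (1/√2)(|0⟩⊗|0⟩ + |1⟩⊗|1⟩) ⊗ e_k ∈ ℂ²⊗ℂ²⊗ℂ^d, where the first qubit passes through the identity channel and the remaining system ℂ²⊗ℂ^d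 through E. Then the output states of the channel id₂⊗E (Kraus operators I₂ ⊗ K for each Kraus operator K of E) on the inputs |w_k⟩⟨w_k| are pairwise orthogonal: tr[(id₂⊗E)(|w_k⟩⟨w_k|)·(id₂⊗E)(|w_l⟩⟨w_l|)] = 0 for all k ≠ l. Hence α(id₂⊗E) ≥ d. -/
open Matrix Kronecker

/-- `|0⟩ ∈ ℂ²`. -/
noncomputable def ket0 : Fin 2 → ℂ := ![1, 0]

/-- `|1⟩ ∈ ℂ²`. -/
noncomputable def ket1 : Fin 2 → ℂ := ![0, 1]

/-- `|+⟩ = (|0⟩ + |1⟩)/√2`. -/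
noncomputable def ketP : Fin 2 → ℂ := ![(Real.sqrt 2 : ℂ)⁻¹, (Real.sqrt 2 : ℂ)⁻¹]

/-- `|−⟩ = (|0⟩ − |1⟩)/√2`. -/
noncomputable def ketM : Fin 2 → ℂ := ![(Real.sqrt 2 : ℂ)⁻¹, -(Real.sqrt 2 : ℂ)⁻¹]

/-- The `4d` Kraus operators `(1/√2)|0⟩⟨0|⊗|e_k⟩⟨e_k|`, `(1/√2)|1⟩⟨+|⊗|e_k⟩⟨e_k|`,
`(1/√2)|0⟩⟨1|⊗|f_k⟩⟨e_k|`, `(1/√2)|1⟩⟨−|⊗|f_k⟩⟨e_k|` on `ℂ² ⊗ ℂ^d`. -/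
noncomputable def EOp {d : ℕ} (e f : Fin d → Fin d → ℂ) :
    Fin 4 × Fin d → Matrix (Fin 2 × Fin d) (Fin 2 × Fin d) ℂ :=
  fun p =>
    (Real.sqrt 2 : ℂ)⁻¹ •
      (![vecMulVec ket0 (star ket0) ⊗ₖ vecMulVec (e p.2) (star (e p.2)),
         vecMulVec ket1 (star ketP) ⊗ₖ vecMulVec (e p.2) (star (e p.2)),
         vecMulVec ket0 (star ket1) ⊗ₖ vecMulVec (f p.2) (star (e p.2)),
         vecMulVec ket1 (star ketM) ⊗ₖ vecMulVec (f p.2) (star (e p.2))] p.1)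

/-- The unit vectors `w_k = (1/√2)(|0⟩⊗|0⟩ + |1⟩⊗|1⟩) ⊗ e_k ∈ ℂ² ⊗ (ℂ² ⊗ ℂ^d)`. -/
noncomputable def wVec {d : ℕ} (e : Fin d → Fin d → ℂ) (k : Fin d) :
    Fin 2 × (Fin 2 × Fin d) → ℂ :=
  fun p => (Real.sqrt 2 : ℂ)⁻¹ * (if p.1 = p.2.1 then 1 else 0) * e k p.2.2

/-! The output of `id₂ ⊗ E` on `|w⟩⟨w|` is `∑ p, |v_p⟩⟨v_p|` with `v_p = (1 ⊗ K_p) w`, so the trace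
inner product of two outputs is `∑ p q, |⟨v_p, v'_q⟩|²` and it suffices that all the `v_p` for `w_k`
are orthogonal to all the `v'_q` for `w_l`. By the transpose trick, for
`K = (1/√2) |a⟩⟨b| ⊗ |g_m⟩⟨e_m|` one gets `(1 ⊗ K) w_k = ½ ⟨e_m, e_k⟩ b̄ ⊗ a ⊗ g_m`, which vanishes
unless `m = k`. For `m = k ≠ l = m'` the inner product factors into a qubit and a system part: the
system part `⟨g_k, g'_l⟩` vanishes when both targets come from the same orthonormal basis, and the
qubit part vanishes otherwise, since `|0⟩⟨0|, |1⟩⟨+|` and `|0⟩⟨1|, |1⟩⟨−|` differ either in the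
ket or in orthogonal bras. -/

section Tensors

variable {R n m : Type*} [CommSemiring R] [Fintype n] [Fintype m]

theorem trace_vecMulVec_mul_vecMulVec (u v w x : n → R) :
    (vecMulVec u v * vecMulVec w x).trace = (v ⬝ᵥ w) * (u ⬝ᵥ x) := by
  rw [vecMulVec_mul_vecMulVec, trace_vecMulVec, dotProduct_smul, smul_eq_mul]

def vecKron (u : n → R) (v : m → R) : n × m → R := fun p => u p.1 * v p.2

theorem star_vecKron_dotProduct_vecKron [StarRing R] (u u' : n → R) (v v' : m → R) :
    star (vecKron u v) ⬝ᵥ vecKron u' v' = (star u ⬝ᵥ u') * (star v ⬝ᵥ v') := by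
  simp only [vecKron, dotProduct, Fintype.sum_prod_type, Finset.sum_mul_sum, Pi.star_apply,
    star_mul']
  refine Finset.sum_congr rfl fun i _ => Finset.sum_congr rfl fun j _ => by ring

variable [DecidableEq n]

/-- The unnormalised vector `∑ i, |i⟩ ⊗ |i⟩ ⊗ x`. -/
def maxEntangledTensor (x : m → R) : n × (n × m) → R :=
  fun p => (if p.1 = p.2.1 then 1 else 0) * x p.2.2

theorem dotProduct_maxEntangledTensor [StarRing R] (x y : m → R) :
    star (maxEntangledTensor (n := n) x) ⬝ᵥ maxEntangledTensor y =
      Fintype.card n * (star x ⬝ᵥ y) := by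
  simp [maxEntangledTensor, dotProduct, Fintype.sum_prod_type, apply_ite, ite_mul,
    Finset.sum_ite_eq]

/-- The transpose trick: `(1 ⊗ A) ∑ i, |i⟩ ⊗ |i⟩ = ∑ i, |i⟩ ⊗ A|i⟩ = (Aᵀ ⊗ 1) ∑ i, |i⟩ ⊗ |i⟩`. -/
theorem one_kronecker_kronecker_mulVec_maxEntangledTensor (A : Matrix n n R)
    (B : Matrix m m R) (x : m → R) :
    ((1 : Matrix n n R) ⊗ₖ (A ⊗ₖ B)) *ᵥ maxEntangledTensor x =
      fun p => A p.2.1 p.1 * (B *ᵥ x) p.2.2 := by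
  funext p
  simp [maxEntangledTensor, mulVec, dotProduct, Fintype.sum_prod_type, one_apply, ite_mul,
    Finset.sum_ite_eq, Finset.mul_sum, mul_assoc]

end Tensors

theorem channelApply_vecMulVec {ι m n : Type*} [Fintype ι] [Fintype m] [Fintype n]
    (E : ι → Matrix m n ℂ) (w : n → ℂ) :
    channelApply E (vecMulVec w (star w)) = ∑ k, vecMulVec (E k *ᵥ w) (star (E k *ᵥ w)) := by
  simp only [channelApply, mul_vecMulVec, vecMulVec_mul, vecMul_conjTranspose, star_star]

theorem trace_channelApply_mul_channelApply_eq_zero {ι κ m n : Type*} [Fintype ι] [Fintype κ]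
    [Fintype m] [Fintype n] (E : ι → Matrix m n ℂ) (F : κ → Matrix m n ℂ) (v w : n → ℂ)
    (h : ∀ p q, star (E p *ᵥ v) ⬝ᵥ (F q *ᵥ w) = 0) :
    (channelApply E (vecMulVec v (star v)) * channelApply F (vecMulVec w (star w))).trace = 0 := by
  simp [channelApply_vecMulVec, Finset.sum_mul, Finset.mul_sum, trace_sum,
    trace_vecMulVec_mul_vecMulVec, h]

noncomputable def krausBra : Fin 4 → Fin 2 → ℂ := ![ket0, ketP, ket1, ketM]

noncomputable def krausKet : Fin 4 → Fin 2 → ℂ := ![ket0, ket1, ket0, ket1]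

def krausTarget {d : ℕ} (e f : Fin d → Fin d → ℂ) : Fin 4 → Fin d → Fin d → ℂ := ![e, e, f, f]

section Kraus

variable {d : ℕ} (e f : Fin d → Fin d → ℂ)

theorem EOp_apply (j : Fin 4) (m : Fin d) :
    EOp e f (j, m) = (Real.sqrt 2 : ℂ)⁻¹ • (vecMulVec (krausKet j) (star (krausBra j)) ⊗ₖ
      vecMulVec (krausTarget e f j m) (star (e m))) := by
  fin_cases j <;> rfl

theorem wVec_eq (k : Fin d) : wVec e k = (Real.sqrt 2 : ℂ)⁻¹ • maxEntangledTensor (e k) := by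
  funext p
  simp [wVec, maxEntangledTensor]

theorem sqrt_two_inv_mul_self : (Real.sqrt 2 : ℂ)⁻¹ * (Real.sqrt 2 : ℂ)⁻¹ = 2⁻¹ := by
  rw [← mul_inv, ← Complex.ofReal_mul, Real.mul_self_sqrt zero_le_two]
  norm_num

theorem wVec_normalized (he : ∀ k, star (e k) ⬝ᵥ e k = 1) (k : Fin d) :
    star (wVec e k) ⬝ᵥ wVec e k = 1 := by
  simp [wVec_eq, dotProduct_maxEntangledTensor, he, star_smul, ← mul_assoc,
    sqrt_two_inv_mul_self]

theorem one_kronecker_EOp_mulVec_wVec (j : Fin 4) (m k : Fin d) :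
    ((1 : Matrix (Fin 2) (Fin 2) ℂ) ⊗ₖ EOp e f (j, m)) *ᵥ wVec e k =
      (2⁻¹ * (star (e m) ⬝ᵥ e k)) •
        vecKron (star (krausBra j)) (vecKron (krausKet j) (krausTarget e f j m)) := by
  rw [EOp_apply, wVec_eq, kronecker_smul, smul_mulVec, mulVec_smul,
    one_kronecker_kronecker_mulVec_maxEntangledTensor, smul_smul, sqrt_two_inv_mul_self,
    vecMulVec_mulVec, op_smul_eq_smul]
  funext p
  simp only [Pi.smul_apply, smul_eq_mul, vecMulVec_apply, Pi.star_apply, vecKron]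
  ring

theorem krausTarget_orthonormal
    (he : ∀ k l, star (e k) ⬝ᵥ e l = if k = l then 1 else 0)
    (hf : ∀ k l, star (f k) ⬝ᵥ f l = if k = l then 1 else 0) (j : Fin 4) (k l : Fin d) :
    star (krausTarget e f j k) ⬝ᵥ krausTarget e f j l = if k = l then 1 else 0 := by
  fin_cases j <;> first | exact he k l | exact hf k l

theorem kraus_qubit_orthogonal_or_krausTarget_eq (j j' : Fin 4) :
    (star (star (krausBra j)) ⬝ᵥ star (krausBra j')) * (star (krausKet j) ⬝ᵥ krausKet j') = 0 ∨
      krausTarget e f j = krausTarget e f j' := by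
  fin_cases j <;> fin_cases j' <;>
    simp [krausTarget, krausBra, krausKet, ket0, ket1, ketP, ketM, dotProduct, Fin.sum_univ_two]

theorem one_kronecker_EOp_mulVec_wVec_orthogonal
    (he : ∀ k l, star (e k) ⬝ᵥ e l = if k = l then 1 else 0)
    (hf : ∀ k l, star (f k) ⬝ᵥ f l = if k = l then 1 else 0) {k l : Fin d} (hkl : k ≠ l)
    (p q : Fin 4 × Fin d) :
    star (((1 : Matrix (Fin 2) (Fin 2) ℂ) ⊗ₖ EOp e f p) *ᵥ wVec e k) ⬝ᵥ
      (((1 : Matrix (Fin 2) (Fin 2) ℂ) ⊗ₖ EOp e f q) *ᵥ wVec e l) = 0 := by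
  obtain ⟨j, m⟩ := p
  obtain ⟨j', m'⟩ := q
  rw [one_kronecker_EOp_mulVec_wVec, one_kronecker_EOp_mulVec_wVec, star_smul, smul_dotProduct,
    dotProduct_smul, star_vecKron_dotProduct_vecKron, star_vecKron_dotProduct_vecKron]
  by_cases hm : m = k
  swap
  · simp [he m k, hm]
  by_cases hm' : m' = l
  swap
  · simp [he m' l, hm']
  subst hm hm'
  rcases kraus_qubit_orthogonal_or_krausTarget_eq e f j j' with h | h
  · rw [← mul_assoc, h, zero_mul, smul_zero, smul_zero]
  · simp [h, krausTarget_orthonormal e f he hf, hkl]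

end Kraus

/-- the `w_k` are unit vectors and the outputs of the channel `id₂ ⊗ E`
on the inputs `|w_k⟩⟨w_k|` are pairwise orthogonal, hence `α(id₂ ⊗ E) ≥ d`. -/
theorem stmt_14 (d : ℕ) (e f : Fin d → Fin d → ℂ)
    (he : ∀ k l, star (e k) ⬝ᵥ e l = if k = l then 1 else 0)
    (hf : ∀ k l, star (f k) ⬝ᵥ f l = if k = l then 1 else 0) :
    (∀ k, star (wVec e k) ⬝ᵥ wVec e k = 1) ∧
    (∀ k l, k ≠ l →
      (channelApply (fun p => (1 : Matrix (Fin 2) (Fin 2) ℂ) ⊗ₖ EOp e f p)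
          (vecMulVec (wVec e k) (star (wVec e k))) *
        channelApply (fun p => (1 : Matrix (Fin 2) (Fin 2) ℂ) ⊗ₖ EOp e f p)
          (vecMulVec (wVec e l) (star (wVec e l)))).trace = 0) :=
  ⟨wVec_normalized e fun k => by simpa using he k k, fun _ _ hkl =>
    trace_channelApply_mul_channelApply_eq_zero _ _ _ _
      (one_kronecker_EOp_mulVec_wVec_orthogonal e f he hf hkl)⟩
end
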